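/- Let V be a finite-dimensional ℂ-vector space, a = (a_1,…,a_n) ∈ ℂ^n, and T_1,…,T_n commuting nilpotent operators on V. Then the formulas X_{ε_i-ε_j}·v = (T_j+(a_j+b_j))v, X_{ε_i+ε_j}·v = v, X_{-ε_i-ε_j}·v = (T_i+(a_i+b_i))(T_j+(a_j+b_j))v, X_{-2ε_i}·v = (T_i+(a_i+b_i))(T_i+(a_i+b_i-1))v, H_{ε_{i+1}-ε_i}·v = (T_{i+1}-T_i+(a_{i+1}+b_{i+1}-a_i-b_i))v, H_{2ε_1}·v = (1/2)(2T_1+(2a_1+2b_1+1))v for v in the copy V^b (b ∈ B) define on FV := ⊕_{b∈B} V^b the structure of an sp_{2n}(ℂ)-module. -/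

import Mathlib

open Matrix

attribute [local instance 100] LieRing.ofAssociativeRing

variable {n : ℕ}

abbrev spC (n : ℕ) : LieSubalgebra ℂ (Matrix (Fin n ⊕ Fin n) (Fin n ⊕ Fin n) ℂ) :=
  LieAlgebra.Symplectic.sp (Fin n) ℂ

lemma mem_spC {A B C D : Matrix (Fin n) (Fin n) ℂ} (hB : Bᵀ = B) (hC : Cᵀ = C)
    (hD : D = -Aᵀ) : fromBlocks A B C D ∈ spC n := by
  rw [show spC n = skewAdjointMatricesLieSubalgebra (Matrix.J (Fin n) ℂ) from rfl,
    mem_skewAdjointMatricesLieSubalgebra, mem_skewAdjointMatricesSubmodule]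
  show _ᵀ * _ = _ * _
  rw [Matrix.J]
  simp [Matrix.fromBlocks_transpose, Matrix.fromBlocks_multiply, hB, hC, hD,
    Matrix.fromBlocks_neg]

noncomputable def Egl (i j : Fin n) : Matrix (Fin n) (Fin n) ℂ := Matrix.single i j 1

lemma Egl_t (i j : Fin n) : (Egl i j)ᵀ = Egl j i := by
  ext k l
  simp [Egl, Matrix.single, Matrix.transpose_apply, and_comm]

/-- embedding of `gl n` into `sp`; `Xgl A` corresponds to `fromBlocks A 0 0 (-Aᵀ)`. -/
noncomputable def Xgl (A : Matrix (Fin n) (Fin n) ℂ) : spC n :=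
  ⟨fromBlocks A 0 0 (-Aᵀ), mem_spC (by simp) (by simp) rfl⟩

/-- the root vector `X_{ε i - ε j}` (for `i ≠ j`). -/
noncomputable def Xem (i j : Fin n) : spC n := Xgl (Egl i j)

/-- the root vector `X_{ε i + ε j}` (equals `X_{2 ε i}` for `i = j` up to normalization). -/
noncomputable def Xep (i j : Fin n) : spC n :=
  ⟨fromBlocks 0 (Egl i j + Egl j i) 0 0,
    mem_spC (by simp [Egl_t, add_comm]) (by simp) (by simp)⟩

/-- the root vector `X_{-ε i - ε j}`. -/
noncomputable def Xm (i j : Fin n) : spC n :=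
  ⟨fromBlocks 0 0 (-(Egl i j + Egl j i)) 0,
    mem_spC (by simp) (by simp [Egl_t, add_comm]) (by simp)⟩

/-- the Cartan element `H_{ε j - ε i}`. -/
noncomputable def Hem (i j : Fin n) : spC n := Xgl (Egl j j - Egl i i)

/-- the Cartan element `H_{2 ε 1}` (1 being the first index, i.e. `0 : Fin n`). -/
noncomputable def H2e1 [NeZero n] : spC n := Xgl (Egl 0 0)

/-- a general element `Hdiag c` of the Cartan subalgebra of `sp`,
on which `ε i` takes the value `c i`. -/
noncomputable def Hdiag (c : Fin n → ℂ) : spC n := Xgl (diagonal c)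

/-- the lattice of allowed exponents: integer vectors with even coordinate sum. -/
def Blat (n : ℕ) : AddSubgroup (Fin n → ℤ) where
  carrier := {b | Even (∑ i, b i)}
  add_mem' := by
    intro x y hx hy
    simpa [Finset.sum_add_distrib] using hx.add hy
  zero_mem' := by simp
  neg_mem' := by
    intro x hx
    simpa [Finset.sum_neg_distrib] using hx.neg

/-- the shift `ε i - ε j` as an element of the lattice `Blat n`. -/
def dem (i j : Fin n) : Blat n :=
  ⟨Pi.single i 1 - Pi.single j 1, by
    have : ∑ k, (Pi.single i 1 - Pi.single j 1 : Fin n → ℤ) k = 0 := by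
      simp [Finset.sum_sub_distrib, Finset.sum_pi_single']
    simp [AddSubgroup.mem_mk, Blat, this]⟩

/-- the shift `ε i + ε j` as an element of the lattice `Blat n`. -/
def dep (i j : Fin n) : Blat n :=
  ⟨Pi.single i 1 + Pi.single j 1, by
    have : ∑ k, (Pi.single i 1 + Pi.single j 1 : Fin n → ℤ) k = 2 := by
      simp [Finset.sum_add_distrib, Finset.sum_pi_single']
    show Even (∑ k, (Pi.single i 1 + Pi.single j 1 : Fin n → ℤ) k)
    rw [this]
    decide⟩

section Aux
variable {V : Type*} [AddCommGroup V] [Module ℂ V]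

noncomputable def opF (δ : Fin n → ℤ) (F : (Fin n → ℤ) → Module.End ℂ V) :
    Module.End ℂ ((Fin n → ℤ) →₀ V) :=
  Finsupp.lsum ℂ fun b => (Finsupp.lsingle (b + δ)).comp (F b)

lemma opF_single (δ : Fin n → ℤ) (F : (Fin n → ℤ) → Module.End ℂ V) (b : Fin n → ℤ) (v : V) :
    opF δ F (Finsupp.single b v) = Finsupp.single (b + δ) (F b v) := by
  simp [opF]

lemma opF_mul (δ δ' : Fin n → ℤ) (F F' : (Fin n → ℤ) → Module.End ℂ V) :
    opF δ F * opF δ' F' = opF (δ + δ') (fun b => F (b + δ') * F' b) := by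
  apply Finsupp.lhom_ext
  intro b v
  simp [Module.End.mul_apply, opF_single, add_assoc, add_comm δ δ']

def eps (p : Fin n ⊕ Fin n) : Fin n → ℤ :=
  match p with
  | .inl i => Pi.single i 1
  | .inr i => -Pi.single i 1

variable (a : Fin n → ℂ) (T : Fin n → Module.End ℂ V)

noncomputable def fz (p : Fin n ⊕ Fin n) : (Fin n → ℤ) → Module.End ℂ V :=
  match p with
  | .inl _ => fun _ => 1
  | .inr i => fun b => T i + (a i + (b i : ℂ)) • 1

noncomputable def zop (p : Fin n ⊕ Fin n) : Module.End ℂ ((Fin n → ℤ) →₀ V) :=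
  opF (eps p) (fz a T p)

lemma smul_one_comm (α β : ℂ) (S S' : Module.End ℂ V) (h : S * S' = S' * S) :
    (S + α • 1) * (S' + β • 1) = (S' + β • 1) * (S + α • 1) := by
  simp only [mul_add, add_mul, mul_smul_comm, smul_mul_assoc, mul_one, one_mul, h, smul_smul,
    smul_add]
  rw [mul_comm β α]
  abel

lemma ccr (hT : ∀ i j, Commute (T i) (T j)) (p q : Fin n ⊕ Fin n) :
    zop a T p * zop a T q = zop a T q * zop a T p + (Matrix.J (Fin n) ℂ p q) • 1 := by
  have J11 : ∀ i j : Fin n, Matrix.J (Fin n) ℂ (Sum.inl i) (Sum.inl j) = 0 := by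
    intro i j; simp [Matrix.J]
  have J22 : ∀ i j : Fin n, Matrix.J (Fin n) ℂ (Sum.inr i) (Sum.inr j) = 0 := by
    intro i j; simp [Matrix.J]
  have J12 : ∀ i j : Fin n, Matrix.J (Fin n) ℂ (Sum.inl i) (Sum.inr j)
      = -(if i = j then 1 else 0) := by
    intro i j; simp [Matrix.J, Matrix.one_apply]
  have J21 : ∀ i j : Fin n, Matrix.J (Fin n) ℂ (Sum.inr i) (Sum.inl j)
      = (if i = j then 1 else 0) := by
    intro i j; simp [Matrix.J, Matrix.one_apply]
  apply Finsupp.lhom_ext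
  intro b v
  rcases p with i | i <;> rcases q with j | j
  · simp [zop, Module.End.mul_apply, opF_single, fz, eps, J11, add_right_comm]
  · rw [J12]
    by_cases h : i = j
    · subst h
      simp [zop, Module.End.mul_apply, opF_single, fz, eps, Pi.single_apply,
        LinearMap.add_apply, LinearMap.smul_apply, add_smul, smul_smul]
      abel
    · simp [zop, Module.End.mul_apply, opF_single, fz, eps, Pi.single_apply, h, add_right_comm]
  · rw [J21]
    by_cases h : i = j
    · subst h
      simp [zop, Module.End.mul_apply, opF_single, fz, eps, Pi.single_apply,
        LinearMap.add_apply, LinearMap.smul_apply, add_smul, smul_smul]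
      abel
    · simp [zop, Module.End.mul_apply, opF_single, fz, eps, Pi.single_apply, h, add_right_comm]
  · rw [J22]
    by_cases h : i = j
    · subst h
      simp [zop, Module.End.mul_apply, opF_single, fz, eps, Pi.single_apply, add_right_comm]
    · have key : (T i + (a i + (b i : ℂ)) • 1) * (T j + (a j + (b j : ℂ)) • 1)
          = (T j + (a j + (b j : ℂ)) • 1) * (T i + (a i + (b i : ℂ)) • 1) :=
        smul_one_comm _ _ _ _ (hT i j)
      simp only [zop, Module.End.mul_apply, opF_single, fz, eps, zero_smul, add_zero]
      rw [← Module.End.mul_apply, ← Module.End.mul_apply]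
      have hbj : (b + -Pi.single j 1 : Fin n → ℤ) i = b i := by
        simp [Pi.single_apply, h]
      have hbi : (b + -Pi.single i 1 : Fin n → ℤ) j = b j := by
        simp [Pi.single_apply, Ne.symm h]
      rw [show b + -Pi.single j 1 + -Pi.single i 1 = b + -Pi.single i 1 + -Pi.single j 1 from
        add_right_comm _ _ _]
      rw [hbj, hbi, key]

lemma quartic {R : Type*} [Ring R] [Module ℂ R] [SMulCommClass ℂ R R] [IsScalarTower ℂ R R]
    {p q r s : R} {α β γ δ : ℂ}
    (hqr : q * r = r * q + α • 1) (hqs : q * s = s * q + β • 1)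
    (hpr : p * r = r * p + γ • 1) (hps : p * s = s * p + δ • 1) :
    p * q * (r * s) - r * s * (p * q)
      = α • (p * s) + β • (p * r) + γ • (s * q) + δ • (r * q) := by
  have main : p * q * (r * s)
      = r * s * (p * q) + α • (p * s) + β • (p * r) + γ • (s * q) + δ • (r * q) := by
    calc p * q * (r * s) = p * (q * r) * s := by noncomm_ring
    _ = p * (r * q + α • 1) * s := by rw [hqr]
    _ = p * r * (q * s) + α • (p * s) := by
        simp only [mul_add, add_mul, smul_mul_assoc, mul_smul_comm, mul_one, one_mul]
        noncomm_ring
    _ = p * r * (s * q + β • 1) + α • (p * s) := by rw [hqs]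
    _ = (p * r) * s * q + β • (p * r) + α • (p * s) := by
        simp only [mul_add, mul_smul_comm, mul_one]
        noncomm_ring
    _ = (r * p + γ • 1) * s * q + β • (p * r) + α • (p * s) := by rw [hpr]
    _ = r * (p * s) * q + γ • (s * q) + β • (p * r) + α • (p * s) := by
        simp only [add_mul, smul_mul_assoc, one_mul]
        noncomm_ring
    _ = r * (s * p + δ • 1) * q + γ • (s * q) + β • (p * r) + α • (p * s) := by rw [hps]
    _ = r * s * (p * q) + α • (p * s) + β • (p * r) + γ • (s * q) + δ • (r * q) := by
        simp only [mul_add, add_mul, smul_mul_assoc, mul_smul_comm, mul_one, one_mul]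
        noncomm_ring
  rw [main]
  abel

noncomputable def QQ (K : Matrix (Fin n ⊕ Fin n) (Fin n ⊕ Fin n) ℂ) :
    Module.End ℂ ((Fin n → ℤ) →₀ V) :=
  ∑ p, ∑ q, K p q • (zop a T p * zop a T q)

lemma QQ_prodsum (K : Matrix (Fin n ⊕ Fin n) (Fin n ⊕ Fin n) ℂ) :
    QQ a T K = ∑ u : (Fin n ⊕ Fin n) × (Fin n ⊕ Fin n),
      K u.1 u.2 • (zop a T u.1 * zop a T u.2) := by
  rw [QQ, Fintype.sum_prod_type]

lemma QQ_neg (K) : QQ a T (-K) = -QQ a T K := by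
  rw [QQ, QQ, ← Finset.sum_neg_distrib]
  refine Finset.sum_congr rfl fun p _ => ?_
  rw [← Finset.sum_neg_distrib]
  refine Finset.sum_congr rfl fun q _ => ?_
  rw [Matrix.neg_apply]
  exact neg_smul (K p q) (zop a T p * zop a T q)

lemma QQ_mul_expand (K L : Matrix (Fin n ⊕ Fin n) (Fin n ⊕ Fin n) ℂ) :
    QQ a T K * QQ a T L = ∑ u : (Fin n ⊕ Fin n) × (Fin n ⊕ Fin n),
      ∑ w : (Fin n ⊕ Fin n) × (Fin n ⊕ Fin n),
      (K u.1 u.2 * L w.1 w.2) • (zop a T u.1 * zop a T u.2 * (zop a T w.1 * zop a T w.2)) := by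
  rw [QQ_prodsum, QQ_prodsum, Finset.sum_mul]
  apply Finset.sum_congr rfl
  intro u _
  rw [Finset.mul_sum]
  apply Finset.sum_congr rfl
  intro w _
  rw [smul_mul_assoc, mul_smul_comm, smul_smul]

lemma fold_sum {M : Type*} [AddCommMonoid M]
    {A : Type*} [Fintype A] (F : A → A → M) :
    ∑ u, ∑ w, F u w = ∑ x : A × A, F x.1 x.2 :=
  (Fintype.sum_prod_type (fun x : A × A => F x.1 x.2)).symm

lemma mul3 {m : Type*} [Fintype m] (K Jm L : Matrix m m ℂ) (p s : m) :
    (K * Jm * L) p s = ∑ q, ∑ r, K p q * (Jm q r * L r s) := by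
  simp only [Matrix.mul_apply, Finset.sum_mul, mul_assoc]
  rw [Finset.sum_comm]

lemma QQ_3mul (K Jm L : Matrix (Fin n ⊕ Fin n) (Fin n ⊕ Fin n) ℂ) :
    QQ a T (K * Jm * L)
      = ∑ x : ((Fin n ⊕ Fin n) × (Fin n ⊕ Fin n)) × ((Fin n ⊕ Fin n) × (Fin n ⊕ Fin n)),
      (K x.1.1 x.2.1 * (Jm x.2.1 x.2.2 * L x.2.2 x.1.2)) •
        (zop a T x.1.1 * zop a T x.1.2) := by
  rw [QQ_prodsum]
  have h1 : ∀ u : (Fin n ⊕ Fin n) × (Fin n ⊕ Fin n),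
      (K * Jm * L) u.1 u.2 • (zop a T u.1 * zop a T u.2)
        = ∑ w : (Fin n ⊕ Fin n) × (Fin n ⊕ Fin n),
          (K u.1 w.1 * (Jm w.1 w.2 * L w.2 u.2)) • (zop a T u.1 * zop a T u.2) := by
    intro u
    rw [mul3, Finset.sum_smul]
    rw [show (∑ q : Fin n ⊕ Fin n, (∑ r : Fin n ⊕ Fin n, K u.1 q * (Jm q r * L r u.2)) •
          (zop a T u.1 * zop a T u.2))
        = ∑ q : Fin n ⊕ Fin n, ∑ r : Fin n ⊕ Fin n, (K u.1 q * (Jm q r * L r u.2)) •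
          (zop a T u.1 * zop a T u.2) from
      Finset.sum_congr rfl fun q _ => Finset.sum_smul]
    exact fold_sum _
  rw [show (∑ u : (Fin n ⊕ Fin n) × (Fin n ⊕ Fin n),
      (K * Jm * L) u.1 u.2 • (zop a T u.1 * zop a T u.2))
      = ∑ u : (Fin n ⊕ Fin n) × (Fin n ⊕ Fin n), ∑ w : (Fin n ⊕ Fin n) × (Fin n ⊕ Fin n),
          (K u.1 w.1 * (Jm w.1 w.2 * L w.2 u.2)) • (zop a T u.1 * zop a T u.2) from
    Finset.sum_congr rfl fun u _ => h1 u]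
  exact fold_sum _

lemma QQ_bracket (hT : ∀ i j, Commute (T i) (T j))
    (K L : Matrix (Fin n ⊕ Fin n) (Fin n ⊕ Fin n) ℂ) (hK : Kᵀ = K) (hL : Lᵀ = L) :
    QQ a T K * QQ a T L - QQ a T L * QQ a T K
      = (2:ℂ) • QQ a T (K * Matrix.J (Fin n) ℂ * L)
        - (2:ℂ) • QQ a T (L * Matrix.J (Fin n) ℂ * K) := by
  set Jm := Matrix.J (Fin n) ℂ with hJm
  have hswap : QQ a T L * QQ a T K
      = ∑ u : _ × _, ∑ w : _ × _, (K u.1 u.2 * L w.1 w.2) •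
          (zop a T w.1 * zop a T w.2 * (zop a T u.1 * zop a T u.2)) := by
    rw [QQ_mul_expand, Finset.sum_comm]
    exact Finset.sum_congr rfl fun u _ => Finset.sum_congr rfl fun w _ => by
      rw [mul_comm (L w.1 w.2)]
  have hdiff : QQ a T K * QQ a T L - QQ a T L * QQ a T K
      = ∑ x : ((Fin n ⊕ Fin n) × (Fin n ⊕ Fin n)) × ((Fin n ⊕ Fin n) × (Fin n ⊕ Fin n)),
        (K x.1.1 x.1.2 * L x.2.1 x.2.2) •
        (Jm x.1.2 x.2.1 • (zop a T x.1.1 * zop a T x.2.2)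
          + Jm x.1.2 x.2.2 • (zop a T x.1.1 * zop a T x.2.1)
          + Jm x.1.1 x.2.1 • (zop a T x.2.2 * zop a T x.1.2)
          + Jm x.1.1 x.2.2 • (zop a T x.2.1 * zop a T x.1.2)) := by
    rw [QQ_mul_expand, hswap, ← Finset.sum_sub_distrib]
    rw [show (∑ u : _ × _, ((∑ w : _ × _, (K u.1 u.2 * L w.1 w.2) •
        (zop a T u.1 * zop a T u.2 * (zop a T w.1 * zop a T w.2)))
        - ∑ w : _ × _, (K u.1 u.2 * L w.1 w.2) •
        (zop a T w.1 * zop a T w.2 * (zop a T u.1 * zop a T u.2))))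
        = ∑ u : _ × _, ∑ w : _ × _, (K u.1 u.2 * L w.1 w.2) •
          (zop a T u.1 * zop a T u.2 * (zop a T w.1 * zop a T w.2)
            - zop a T w.1 * zop a T w.2 * (zop a T u.1 * zop a T u.2)) from
      Finset.sum_congr rfl fun u _ => by
        rw [← Finset.sum_sub_distrib]
        exact Finset.sum_congr rfl fun w _ => (smul_sub _ _ _).symm]
    rw [fold_sum]
    refine Finset.sum_congr rfl fun x _ => ?_
    rw [quartic (ccr a T hT x.1.2 x.2.1) (ccr a T hT x.1.2 x.2.2)
      (ccr a T hT x.1.1 x.2.1) (ccr a T hT x.1.1 x.2.2)]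
  rw [hdiff]
  simp only [smul_add, smul_smul, Finset.sum_add_distrib]
  have e1 : (∑ x : ((Fin n ⊕ Fin n) × (Fin n ⊕ Fin n)) × ((Fin n ⊕ Fin n) × (Fin n ⊕ Fin n)),
      (K x.1.1 x.1.2 * L x.2.1 x.2.2 * Jm x.1.2 x.2.1) • (zop a T x.1.1 * zop a T x.2.2))
      = QQ a T (K * Jm * L) := by
    rw [QQ_3mul]
    refine Fintype.sum_equiv ⟨fun x => ((x.1.1, x.2.2), (x.1.2, x.2.1)),
      fun y => ((y.1.1, y.2.1), (y.2.2, y.1.2)), fun x => rfl, fun y => rfl⟩ _ _ fun x => ?_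
    show _ = (K x.1.1 x.1.2 * (Jm x.1.2 x.2.1 * L x.2.1 x.2.2)) • _
    congr 1
    ring
  have e2 : (∑ x : ((Fin n ⊕ Fin n) × (Fin n ⊕ Fin n)) × ((Fin n ⊕ Fin n) × (Fin n ⊕ Fin n)),
      (K x.1.1 x.1.2 * L x.2.1 x.2.2 * Jm x.1.2 x.2.2) • (zop a T x.1.1 * zop a T x.2.1))
      = QQ a T (K * Jm * Lᵀ) := by
    rw [QQ_3mul]
    refine Fintype.sum_equiv ⟨fun x => ((x.1.1, x.2.1), (x.1.2, x.2.2)),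
      fun y => ((y.1.1, y.2.1), (y.1.2, y.2.2)), fun x => rfl, fun y => rfl⟩ _ _ fun x => ?_
    show _ = (K x.1.1 x.1.2 * (Jm x.1.2 x.2.2 * Lᵀ x.2.2 x.2.1)) • _
    rw [Matrix.transpose_apply]
    congr 1
    ring
  have e3 : (∑ x : ((Fin n ⊕ Fin n) × (Fin n ⊕ Fin n)) × ((Fin n ⊕ Fin n) × (Fin n ⊕ Fin n)),
      (K x.1.1 x.1.2 * L x.2.1 x.2.2 * Jm x.1.1 x.2.1) • (zop a T x.2.2 * zop a T x.1.2))
      = QQ a T (Lᵀ * Jmᵀ * K) := by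
    rw [QQ_3mul]
    refine Fintype.sum_equiv ⟨fun x => ((x.2.2, x.1.2), (x.2.1, x.1.1)),
      fun y => ((y.2.2, y.1.2), (y.2.1, y.1.1)), fun x => rfl, fun y => rfl⟩ _ _ fun x => ?_
    show _ = (Lᵀ x.2.2 x.2.1 * (Jmᵀ x.2.1 x.1.1 * K x.1.1 x.1.2)) • _
    rw [Matrix.transpose_apply, Matrix.transpose_apply]
    congr 1
    ring
  have e4 : (∑ x : ((Fin n ⊕ Fin n) × (Fin n ⊕ Fin n)) × ((Fin n ⊕ Fin n) × (Fin n ⊕ Fin n)),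
      (K x.1.1 x.1.2 * L x.2.1 x.2.2 * Jm x.1.1 x.2.2) • (zop a T x.2.1 * zop a T x.1.2))
      = QQ a T (L * Jmᵀ * K) := by
    rw [QQ_3mul]
    refine Fintype.sum_equiv ⟨fun x => ((x.2.1, x.1.2), (x.2.2, x.1.1)),
      fun y => ((y.2.2, y.1.2), (y.1.1, y.2.1)), fun x => rfl, fun y => rfl⟩ _ _ fun x => ?_
    show _ = (L x.2.1 x.2.2 * (Jmᵀ x.2.2 x.1.1 * K x.1.1 x.1.2)) • _
    rw [Matrix.transpose_apply]
    congr 1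
    ring
  rw [e1, e2, e3, e4, hL, hJm, Matrix.J_transpose]
  rw [show L * -Matrix.J (Fin n) ℂ * K = -(L * Matrix.J (Fin n) ℂ * K) by
    rw [Matrix.mul_neg, Matrix.neg_mul]]
  rw [QQ_neg, two_smul, two_smul]
  abel

noncomputable def Kd (n : ℕ) : Matrix (Fin n ⊕ Fin n) (Fin n ⊕ Fin n) ℂ :=
  fromBlocks 1 0 0 (-1)

lemma Kd_mul_Kd : Kd n * Kd n = 1 := by
  simp [Kd, Matrix.fromBlocks_multiply, ← Matrix.fromBlocks_one]

lemma Kd_J : Kd n * Matrix.J (Fin n) ℂ = -(Matrix.J (Fin n) ℂ * Kd n) := by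
  simp [Kd, Matrix.J, Matrix.fromBlocks_multiply, Matrix.fromBlocks_neg]

lemma Kd_transpose : (Kd n)ᵀ = Kd n := by
  simp [Kd, Matrix.fromBlocks_transpose]

lemma sp_cond {A : Matrix (Fin n ⊕ Fin n) (Fin n ⊕ Fin n) ℂ} (hA : A ∈ spC n) :
    Aᵀ * Matrix.J (Fin n) ℂ = Matrix.J (Fin n) ℂ * (-A) := by
  rw [show spC n = skewAdjointMatricesLieSubalgebra (Matrix.J (Fin n) ℂ) from rfl,
    mem_skewAdjointMatricesLieSubalgebra, mem_skewAdjointMatricesSubmodule] at hA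
  exact hA

lemma sp_transpose {A : Matrix (Fin n ⊕ Fin n) (Fin n ⊕ Fin n) ℂ} (hA : A ∈ spC n) :
    Aᵀ = Matrix.J (Fin n) ℂ * A * Matrix.J (Fin n) ℂ := by
  have h := sp_cond hA
  have h2 : Matrix.J (Fin n) ℂ * Matrix.J (Fin n) ℂ = -1 := Matrix.J_squared _ _
  calc Aᵀ = -(Aᵀ * (Matrix.J (Fin n) ℂ * Matrix.J (Fin n) ℂ)) := by
        rw [h2]; noncomm_ring
    _ = -((Aᵀ * Matrix.J (Fin n) ℂ) * Matrix.J (Fin n) ℂ) := by noncomm_ring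
    _ = -((Matrix.J (Fin n) ℂ * (-A)) * Matrix.J (Fin n) ℂ) := by rw [h]
    _ = Matrix.J (Fin n) ℂ * A * Matrix.J (Fin n) ℂ := by noncomm_ring

/-- the matrix coefficient of the oscillator representation. -/
noncomputable def muM (A : Matrix (Fin n ⊕ Fin n) (Fin n ⊕ Fin n) ℂ) :
    Matrix (Fin n ⊕ Fin n) (Fin n ⊕ Fin n) ℂ :=
  (-(1/2 : ℂ)) • (Kd n * A * Kd n * Matrix.J (Fin n) ℂ)

lemma symm_KAKJ {A : Matrix (Fin n ⊕ Fin n) (Fin n ⊕ Fin n) ℂ} (hA : A ∈ spC n) :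
    (Kd n * A * Kd n * Matrix.J (Fin n) ℂ)ᵀ = Kd n * A * Kd n * Matrix.J (Fin n) ℂ := by
  have h2 : Matrix.J (Fin n) ℂ * Matrix.J (Fin n) ℂ = -1 := Matrix.J_squared _ _
  have hAt := sp_transpose hA
  have hJK : Matrix.J (Fin n) ℂ * Kd n = -(Kd n * Matrix.J (Fin n) ℂ) := by rw [Kd_J, neg_neg]
  calc (Kd n * A * Kd n * Matrix.J (Fin n) ℂ)ᵀ
      = (Matrix.J (Fin n) ℂ)ᵀ * ((Kd n)ᵀ * (Aᵀ * (Kd n)ᵀ)) := by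
        rw [Matrix.transpose_mul, Matrix.transpose_mul, Matrix.transpose_mul]
    _ = (-(Matrix.J (Fin n) ℂ)) * (Kd n * ((Matrix.J (Fin n) ℂ * A * Matrix.J (Fin n) ℂ) * Kd n)) := by
        rw [Matrix.J_transpose, Kd_transpose, hAt]
    _ = -((Matrix.J (Fin n) ℂ * Kd n) * Matrix.J (Fin n) ℂ * A * ((Matrix.J (Fin n) ℂ * Kd n))) := by
        noncomm_ring
    _ = -((-(Kd n * Matrix.J (Fin n) ℂ)) * Matrix.J (Fin n) ℂ * A * (-(Kd n * Matrix.J (Fin n) ℂ))) := by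
        rw [hJK]
    _ = -(Kd n * (Matrix.J (Fin n) ℂ * Matrix.J (Fin n) ℂ) * (A * (Kd n * Matrix.J (Fin n) ℂ))) := by
        noncomm_ring
    _ = -(Kd n * (-1) * (A * (Kd n * Matrix.J (Fin n) ℂ))) := by rw [h2]
    _ = Kd n * A * Kd n * Matrix.J (Fin n) ℂ := by noncomm_ring

lemma KAKJ_mul {A B : Matrix (Fin n ⊕ Fin n) (Fin n ⊕ Fin n) ℂ} :
    (Kd n * A * Kd n * Matrix.J (Fin n) ℂ) * Matrix.J (Fin n) ℂ * (Kd n * B * Kd n * Matrix.J (Fin n) ℂ)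
      = -(Kd n * (A * B) * Kd n * Matrix.J (Fin n) ℂ) := by
  have h2 : Matrix.J (Fin n) ℂ * Matrix.J (Fin n) ℂ = -1 := Matrix.J_squared _ _
  calc (Kd n * A * Kd n * Matrix.J (Fin n) ℂ) * Matrix.J (Fin n) ℂ * (Kd n * B * Kd n * Matrix.J (Fin n) ℂ)
      = Kd n * A * Kd n * (Matrix.J (Fin n) ℂ * Matrix.J (Fin n) ℂ) * (Kd n * B * Kd n * Matrix.J (Fin n) ℂ) := by
        noncomm_ring
    _ = Kd n * A * Kd n * (-1) * (Kd n * B * Kd n * Matrix.J (Fin n) ℂ) := by rw [h2]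
    _ = -(Kd n * A * (Kd n * Kd n) * B * Kd n * Matrix.J (Fin n) ℂ) := by noncomm_ring
    _ = -(Kd n * A * 1 * B * Kd n * Matrix.J (Fin n) ℂ) := by rw [Kd_mul_Kd]
    _ = -(Kd n * (A * B) * Kd n * Matrix.J (Fin n) ℂ) := by noncomm_ring

lemma QQ_smul (c : ℂ) (K) : QQ a T (c • K) = c • QQ a T K := by
  rw [QQ, QQ, Finset.smul_sum]
  refine Finset.sum_congr rfl fun p _ => ?_
  rw [Finset.smul_sum]
  refine Finset.sum_congr rfl fun q _ => ?_
  rw [Matrix.smul_apply]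
  exact mul_smul c (K p q) (zop a T p * zop a T q)

lemma QQ_sub (K L) : QQ a T (K - L) = QQ a T K - QQ a T L := by
  rw [QQ, QQ, QQ, ← Finset.sum_sub_distrib]
  refine Finset.sum_congr rfl fun p _ => ?_
  rw [← Finset.sum_sub_distrib]
  refine Finset.sum_congr rfl fun q _ => ?_
  rw [Matrix.sub_apply]
  exact sub_smul (K p q) (L p q) (zop a T p * zop a T q)

/-- the operator-level Lie algebra homomorphism property on the full lattice. -/
lemma lf_lie (hT : ∀ i j, Commute (T i) (T j))
    {M N : Matrix (Fin n ⊕ Fin n) (Fin n ⊕ Fin n) ℂ} (hM : M ∈ spC n) (hN : N ∈ spC n) :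
    QQ a T (muM (M * N - N * M))
      = QQ a T (muM M) * QQ a T (muM N) - QQ a T (muM N) * QQ a T (muM M) := by
  have hb := QQ_bracket a T hT (Kd n * M * Kd n * Matrix.J (Fin n) ℂ) (Kd n * N * Kd n * Matrix.J (Fin n) ℂ)
    (symm_KAKJ hM) (symm_KAKJ hN)
  rw [KAKJ_mul, KAKJ_mul, QQ_neg, QQ_neg] at hb
  have lhs : QQ a T (muM (M * N - N * M))
      = (-(1/2 : ℂ)) • (QQ a T (Kd n * (M * N) * Kd n * Matrix.J (Fin n) ℂ)
          - QQ a T (Kd n * (N * M) * Kd n * Matrix.J (Fin n) ℂ)) := by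
    rw [muM, QQ_smul]
    rw [show Kd n * (M * N - N * M) * Kd n * Matrix.J (Fin n) ℂ
        = Kd n * (M * N) * Kd n * Matrix.J (Fin n) ℂ - Kd n * (N * M) * Kd n * Matrix.J (Fin n) ℂ by noncomm_ring]
    rw [QQ_sub]
  calc QQ a T (muM (M * N - N * M))
      = (-(1/2 : ℂ)) • (QQ a T (Kd n * (M * N) * Kd n * Matrix.J (Fin n) ℂ)
          - QQ a T (Kd n * (N * M) * Kd n * Matrix.J (Fin n) ℂ)) := lhs
    _ = ((1/4 : ℂ)) • ((2 : ℂ) • (-QQ a T (Kd n * (M * N) * Kd n * Matrix.J (Fin n) ℂ))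
          - (2 : ℂ) • (-QQ a T (Kd n * (N * M) * Kd n * Matrix.J (Fin n) ℂ))) := by
        module
    _ = ((1/4 : ℂ)) • (QQ a T (Kd n * M * Kd n * Matrix.J (Fin n) ℂ) * QQ a T (Kd n * N * Kd n * Matrix.J (Fin n) ℂ)
          - QQ a T (Kd n * N * Kd n * Matrix.J (Fin n) ℂ) * QQ a T (Kd n * M * Kd n * Matrix.J (Fin n) ℂ)) := by
        rw [← hb]
    _ = QQ a T (muM M) * QQ a T (muM N) - QQ a T (muM N) * QQ a T (muM M) := by
        rw [muM, muM, QQ_smul, QQ_smul, smul_mul_smul_comm, smul_mul_smul_comm]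
        module

def pairδ (p q : Fin n ⊕ Fin n) : Blat n :=
  ⟨eps p + eps q, by
    show Even (∑ i, (eps p + eps q) i)
    rw [show (∑ i, (eps p + eps q) i) = (∑ i, eps p i) + ∑ i, eps q i from
      Finset.sum_add_distrib]
    rcases p with i | i <;> rcases q with j | j <;>
      simp [eps, Finset.sum_pi_single'] <;> decide⟩

lemma pairδ_coe (p q : Fin n ⊕ Fin n) : (pairδ p q : Fin n → ℤ) = eps p + eps q := rfl

variable (n) in
noncomputable def opB (δ : Blat n) (F : (Fin n → ℤ) → Module.End ℂ V) :
    Module.End ℂ (Blat n →₀ V) :=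
  Finsupp.lsum ℂ fun b => (Finsupp.lsingle (b + δ)).comp (F b.1)

lemma opB_single (δ : Blat n) (F : (Fin n → ℤ) → Module.End ℂ V) (b : Blat n) (v : V) :
    opB n δ F (Finsupp.single b v) = Finsupp.single (b + δ) (F b.1 v) := by
  simp [opB]

noncomputable def ZZB (p q : Fin n ⊕ Fin n) : Module.End ℂ (Blat n →₀ V) :=
  opB n (pairδ p q) (fun c => fz a T p (c + eps q) * fz a T q c)

noncomputable def ιmap : (Blat n →₀ V) →ₗ[ℂ] ((Fin n → ℤ) →₀ V) :=
  Finsupp.lmapDomain V ℂ (fun b : Blat n => (b : Fin n → ℤ))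

lemma ιmap_single (b : Blat n) (v : V) :
    ιmap (Finsupp.single b v) = Finsupp.single (b : Fin n → ℤ) v := by
  simp [ιmap, Finsupp.mapDomain_single]

lemma ιmap_inj : Function.Injective (ιmap (n := n) (V := V)) :=
  Finsupp.mapDomain_injective Subtype.val_injective

lemma inter_ZZB (p q : Fin n ⊕ Fin n) (x : Blat n →₀ V) :
    ιmap (ZZB a T p q x) = (zop a T p * zop a T q) (ιmap x) := by
  have h : (ιmap (n := n) (V := V)).comp (ZZB a T p q)
      = ((zop a T p * zop a T q) : Module.End ℂ _).comp ιmap := by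
    rw [show zop a T p * zop a T q
        = opF (eps p + eps q) (fun c => fz a T p (c + eps q) * fz a T q c) from by
      rw [zop, zop, opF_mul]]
    apply Finsupp.lhom_ext
    intro b v
    simp only [LinearMap.comp_apply, ZZB, opB_single, ιmap_single, opF_single]
    congr 1
  exact LinearMap.congr_fun h x

noncomputable def QQlinB : Matrix (Fin n ⊕ Fin n) (Fin n ⊕ Fin n) ℂ
    →ₗ[ℂ] Module.End ℂ (Blat n →₀ V) where
  toFun := fun K => ∑ p, ∑ q, K p q • ZZB a T p q
  map_add' := by
    intro K L
    rw [← Finset.sum_add_distrib]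
    refine Finset.sum_congr rfl fun p _ => ?_
    rw [← Finset.sum_add_distrib]
    refine Finset.sum_congr rfl fun q _ => ?_
    rw [Matrix.add_apply]
    exact add_smul (K p q) (L p q) (ZZB a T p q)
  map_smul' := by
    intro c K
    show (∑ p, ∑ q, (c • K) p q • ZZB a T p q) = c • ∑ p, ∑ q, K p q • ZZB a T p q
    rw [Finset.smul_sum]
    refine Finset.sum_congr rfl fun p _ => ?_
    rw [Finset.smul_sum]
    refine Finset.sum_congr rfl fun q _ => ?_
    rw [Matrix.smul_apply]
    exact mul_smul c (K p q) (ZZB a T p q)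

lemma inter_QQ (K : Matrix (Fin n ⊕ Fin n) (Fin n ⊕ Fin n) ℂ) (x : Blat n →₀ V) :
    ιmap (QQlinB a T K x) = QQ a T K (ιmap x) := by
  show ιmap ((∑ p, ∑ q, K p q • ZZB a T p q) x) = _
  rw [QQ]
  rw [LinearMap.sum_apply, map_sum, LinearMap.sum_apply]
  refine Finset.sum_congr rfl fun p _ => ?_
  rw [LinearMap.sum_apply, map_sum, LinearMap.sum_apply]
  refine Finset.sum_congr rfl fun q _ => ?_
  rw [LinearMap.smul_apply, LinearMap.smul_apply, LinearMap.map_smul, inter_ZZB]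

noncomputable def muL : Matrix (Fin n ⊕ Fin n) (Fin n ⊕ Fin n) ℂ
    →ₗ[ℂ] Matrix (Fin n ⊕ Fin n) (Fin n ⊕ Fin n) ℂ where
  toFun := muM
  map_add' := by
    intro A B
    simp [muM, Matrix.mul_add, Matrix.add_mul, smul_add]
  map_smul' := by
    intro c A
    simp [muM, Matrix.mul_smul, Matrix.smul_mul, smul_comm c]

noncomputable def piB (hT : ∀ i j, Commute (T i) (T j)) :
    spC n →ₗ⁅ℂ⁆ Module.End ℂ (Blat n →₀ V) where
  toLinearMap := (QQlinB a T).comp ((muL).comp (LieSubalgebra.toSubmodule (spC n)).subtype)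
  map_lie' := by
    intro g h
    have cancel : ∀ f f' : Module.End ℂ (Blat n →₀ V),
        (∀ x, ιmap (f x) = ιmap (f' x)) → f = f' := fun f f' hh =>
      LinearMap.ext fun x => ιmap_inj (hh x)
    apply cancel
    intro x
    show ιmap (QQlinB a T (muM (⁅g, h⁆ : spC n).1) x)
      = ιmap ((⁅QQlinB a T (muM g.1), QQlinB a T (muM h.1)⁆ :
          Module.End ℂ (Blat n →₀ V)) x)
    rw [Ring.lie_def, LinearMap.sub_apply, Module.End.mul_apply, Module.End.mul_apply,
      map_sub, inter_QQ, inter_QQ, inter_QQ, inter_QQ]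
    rw [show ((⁅g, h⁆ : spC n) : Matrix (Fin n ⊕ Fin n) (Fin n ⊕ Fin n) ℂ)
        = g.1 * h.1 - h.1 * g.1 from by
      rw [LieSubalgebra.coe_bracket, Ring.lie_def]]
    rw [inter_QQ, lf_lie a T hT g.2 h.2]
    rw [LinearMap.sub_apply, Module.End.mul_apply, Module.End.mul_apply]


lemma muM_fromBlocks (A B C D : Matrix (Fin n) (Fin n) ℂ) :
    muM (fromBlocks A B C D)
      = fromBlocks ((1/2:ℂ)•B) ((1/2:ℂ)•A) ((-(1/2:ℂ))•D) ((-(1/2:ℂ))•C) := by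
  rw [muM, Kd, Matrix.J]
  simp only [Matrix.fromBlocks_multiply, fromBlocks_smul, Matrix.mul_one, Matrix.mul_zero,
    Matrix.zero_mul, Matrix.one_mul, Matrix.mul_neg, Matrix.neg_mul, Matrix.mul_one,
    add_zero, zero_add, neg_neg, neg_smul_neg]

lemma sum_sum_ite {W : Type*} [AddCommGroup W] [Module ℂ W]
    (i j : Fin n) (G : Fin n → Fin n → W) :
    (∑ x, ∑ y, if i = x then if j = y then G x y else 0 else 0) = G i j := by
  have h : ∀ x, (∑ y, if i = x then if j = y then G x y else 0 else 0)
      = if i = x then G x j else 0 := by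
    intro x
    by_cases h : i = x <;> simp [h]
  simp [h]

variable (hT : ∀ i j, Commute (T i) (T j))

lemma piB_single (g : spC n) (b : Blat n) (v : V) :
    piB a T hT g (Finsupp.single b v)
      = ∑ p, ∑ q, muM (g : Matrix (Fin n ⊕ Fin n) (Fin n ⊕ Fin n) ℂ) p q •
          Finsupp.single (b + pairδ p q) ((fz a T p (b.1 + eps q) * fz a T q b.1) v) := by
  show ((QQlinB a T) (muM g.1)) (Finsupp.single b v) = _
  rw [show (QQlinB a T) (muM g.1) = ∑ p, ∑ q, muM g.1 p q • ZZB a T p q from rfl]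
  rw [LinearMap.sum_apply]
  refine Finset.sum_congr rfl fun p _ => ?_
  rw [LinearMap.sum_apply]
  refine Finset.sum_congr rfl fun q _ => ?_
  rw [LinearMap.smul_apply, ZZB, opB_single]

lemma eval_Xep (i j : Fin n) (b : Blat n) (v : V) :
    piB a T hT (Xep i j) (Finsupp.single b v) = Finsupp.single (b + dep i j) v := by
  rw [piB_single, show ((Xep i j : spC n) : Matrix (Fin n ⊕ Fin n) (Fin n ⊕ Fin n) ℂ)
      = fromBlocks 0 (Egl i j + Egl j i) 0 0 from rfl, muM_fromBlocks]
  have h1 : pairδ (Sum.inl i) (Sum.inl j) = dep i j :=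
    Subtype.ext (by simp [pairδ_coe, eps, dep])
  have h2 : pairδ (Sum.inl j) (Sum.inl i) = dep i j :=
    Subtype.ext (by simp [pairδ_coe, eps, dep, add_comm])
  simp only [Fintype.sum_sum_type, fromBlocks_apply₁₁, fromBlocks_apply₁₂,
    fromBlocks_apply₂₁, fromBlocks_apply₂₂, Matrix.smul_apply, Matrix.zero_apply,
    smul_zero, zero_smul, smul_eq_mul, Finset.sum_const_zero, add_zero, zero_add,
    Matrix.add_apply, Egl, Matrix.single, Matrix.of_apply, ite_and,
    mul_ite, mul_one, mul_zero, ite_smul, Finset.mem_univ, if_true,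
    mul_add, add_smul, Finset.sum_add_distrib, fz, Module.End.one_apply, one_mul, zero_smul,
    sum_sum_ite]
  rw [h1, h2]
  module



lemma eval_Xem (i j : Fin n) (hij : i ≠ j) (b : Blat n) (v : V) :
    piB a T hT (Xem i j) (Finsupp.single b v)
      = Finsupp.single (b + dem i j) ((T j + (a j + (b.1 j : ℂ)) • 1) v) := by
  rw [piB_single, show ((Xem i j : spC n) : Matrix (Fin n ⊕ Fin n) (Fin n ⊕ Fin n) ℂ)
      = fromBlocks (Egl i j) 0 0 (-(Egl j i)) from by rw [← Egl_t i j]; rfl, muM_fromBlocks]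
  have h1 : pairδ (Sum.inl i) (Sum.inr j) = dem i j :=
    Subtype.ext (by simp [pairδ_coe, eps, dem, sub_eq_add_neg])
  have h2 : pairδ (Sum.inr j) (Sum.inl i) = dem i j :=
    Subtype.ext (by simp [pairδ_coe, eps, dem, sub_eq_add_neg, add_comm])
  simp only [Fintype.sum_sum_type, fromBlocks_apply₁₁, fromBlocks_apply₁₂,
    fromBlocks_apply₂₁, fromBlocks_apply₂₂, Matrix.smul_apply, Matrix.zero_apply,
    neg_smul_neg, smul_zero, zero_smul, smul_eq_mul, Finset.sum_const_zero, add_zero, zero_add,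
    Egl, Matrix.single, Matrix.of_apply, ite_and,
    mul_ite, mul_one, mul_zero, ite_smul, Finset.mem_univ, if_true,
    mul_add, add_smul, Finset.sum_add_distrib, fz, Module.End.one_apply, one_mul, mul_one,
    sum_sum_ite]
  rw [h1, h2]
  simp only [eps, Pi.add_apply, Pi.neg_apply, Pi.single_apply, if_neg (Ne.symm hij), neg_zero,
    add_zero, Int.cast_add, Int.cast_zero, one_mul, mul_one]
  module

lemma eval_Xm_ne (i j : Fin n) (hij : i ≠ j) (b : Blat n) (v : V) :
    piB a T hT (Xm i j) (Finsupp.single b v)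
      = Finsupp.single (b - dep i j)
          (((T i + (a i + (b.1 i : ℂ)) • 1) * (T j + (a j + (b.1 j : ℂ)) • 1)) v) := by
  rw [piB_single, show ((Xm i j : spC n) : Matrix (Fin n ⊕ Fin n) (Fin n ⊕ Fin n) ℂ)
      = fromBlocks 0 0 (-(Egl i j + Egl j i)) 0 from rfl, muM_fromBlocks]
  have hco : ((-(dep i j) : Blat n) : Fin n → ℤ) = -(Pi.single i 1 + Pi.single j 1) := rfl
  have h1 : pairδ (Sum.inr i) (Sum.inr j) = -(dep i j) :=
    Subtype.ext (by rw [pairδ_coe, hco, neg_add]; rfl)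
  have h2 : pairδ (Sum.inr j) (Sum.inr i) = -(dep i j) :=
    Subtype.ext (by rw [pairδ_coe, hco, neg_add]; exact add_comm _ _)
  simp only [Fintype.sum_sum_type, fromBlocks_apply₁₁, fromBlocks_apply₁₂,
    fromBlocks_apply₂₁, fromBlocks_apply₂₂, Matrix.smul_apply, Matrix.zero_apply,
    neg_smul_neg, smul_zero, zero_smul, smul_eq_mul, Finset.sum_const_zero, add_zero, zero_add,
    Matrix.add_apply, Egl, Matrix.single, Matrix.of_apply, ite_and,
    mul_ite, mul_one, mul_zero, ite_smul, Finset.mem_univ, if_true,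
    mul_add, add_smul, Finset.sum_add_distrib, fz,
    sum_sum_ite]
  rw [h1, h2, sub_eq_add_neg b (dep i j)]
  simp only [eps, Pi.add_apply, Pi.neg_apply, Pi.single_apply, if_neg (Ne.symm hij),
    if_neg hij, neg_zero, add_zero, Int.cast_add, Int.cast_zero, Int.cast_neg,
    add_mul, mul_add, smul_mul_assoc, mul_smul_comm, smul_smul, mul_one, one_mul,
    (hT j i).eq]
  simp only [LinearMap.add_apply, LinearMap.smul_apply, Module.End.one_apply,
    Module.End.mul_apply]
  simp only [if_true, Int.cast_one, Finsupp.smul_single, ← Finsupp.single_add,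
    ← Finsupp.single_sub]
  refine congrArg (Finsupp.single _) ?_
  module

lemma eval_Xm_eq (i : Fin n) (b : Blat n) (v : V) :
    piB a T hT (Xm i i) (Finsupp.single b v)
      = Finsupp.single (b - dep i i)
          (((T i + (a i + (b.1 i : ℂ)) • 1) * (T i + (a i + (b.1 i : ℂ) - 1) • 1)) v) := by
  rw [piB_single, show ((Xm i i : spC n) : Matrix (Fin n ⊕ Fin n) (Fin n ⊕ Fin n) ℂ)
      = fromBlocks 0 0 (-(Egl i i + Egl i i)) 0 from rfl, muM_fromBlocks]
  have hco : ((-(dep i i) : Blat n) : Fin n → ℤ) = -(Pi.single i 1 + Pi.single i 1) := rfl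
  have h1 : pairδ (Sum.inr i) (Sum.inr i) = -(dep i i) :=
    Subtype.ext (by rw [pairδ_coe, hco, neg_add]; rfl)
  simp only [Fintype.sum_sum_type, fromBlocks_apply₁₁, fromBlocks_apply₁₂,
    fromBlocks_apply₂₁, fromBlocks_apply₂₂, Matrix.smul_apply, Matrix.zero_apply,
    neg_smul_neg, smul_zero, zero_smul, smul_eq_mul, Finset.sum_const_zero, add_zero, zero_add,
    Matrix.add_apply, Egl, Matrix.single, Matrix.of_apply, ite_and,
    mul_ite, mul_one, mul_zero, ite_smul, Finset.mem_univ, if_true,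
    mul_add, add_smul, Finset.sum_add_distrib, fz,
    sum_sum_ite]
  rw [h1, sub_eq_add_neg b (dep i i)]
  simp only [eps, Pi.add_apply, Pi.neg_apply, Pi.single_apply, if_pos rfl, Int.cast_add,
    Int.cast_neg, Int.cast_one, sub_mul, mul_sub, sub_smul,
    add_mul, mul_add, smul_mul_assoc, mul_smul_comm, smul_smul, mul_one, one_mul]
  simp only [LinearMap.add_apply, LinearMap.smul_apply, Module.End.one_apply,
    LinearMap.sub_apply, Module.End.mul_apply]
  simp only [if_true, Int.cast_one, Finsupp.smul_single, ← Finsupp.single_add,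
    ← Finsupp.single_sub]
  refine congrArg (Finsupp.single _) ?_
  module

lemma eval_Hem (i j : Fin n) (hij : i ≠ j) (b : Blat n) (v : V) :
    piB a T hT (Hem i j) (Finsupp.single b v)
      = Finsupp.single b
          ((T j - T i + (a j + (b.1 j : ℂ) - a i - (b.1 i : ℂ)) • 1) v) := by
  rw [piB_single, show ((Hem i j : spC n) : Matrix (Fin n ⊕ Fin n) (Fin n ⊕ Fin n) ℂ)
      = fromBlocks (Egl j j - Egl i i) 0 0 (-(Egl j j - Egl i i)) from by
        rw [show ((Hem i j : spC n) : Matrix (Fin n ⊕ Fin n) (Fin n ⊕ Fin n) ℂ)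
          = fromBlocks (Egl j j - Egl i i) 0 0 (-(Egl j j - Egl i i)ᵀ) from rfl,
          Matrix.transpose_sub, Egl_t, Egl_t], muM_fromBlocks]
  have h1 : pairδ (Sum.inl j) (Sum.inr j) = 0 :=
    Subtype.ext (by simp [pairδ_coe, eps])
  have h2 : pairδ (Sum.inl i) (Sum.inr i) = 0 :=
    Subtype.ext (by simp [pairδ_coe, eps])
  have h3 : pairδ (Sum.inr j) (Sum.inl j) = 0 :=
    Subtype.ext (by simp [pairδ_coe, eps])
  have h4 : pairδ (Sum.inr i) (Sum.inl i) = 0 :=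
    Subtype.ext (by simp [pairδ_coe, eps])
  simp only [Fintype.sum_sum_type, fromBlocks_apply₁₁, fromBlocks_apply₁₂,
    fromBlocks_apply₂₁, fromBlocks_apply₂₂, Matrix.smul_apply, Matrix.zero_apply,
    neg_smul_neg, smul_zero, zero_smul, smul_eq_mul, Finset.sum_const_zero, add_zero, zero_add,
    Matrix.sub_apply, Egl, Matrix.single, Matrix.of_apply, ite_and,
    mul_ite, mul_one, mul_zero, ite_smul, Finset.mem_univ, if_true,
    mul_sub, sub_smul, Finset.sum_sub_distrib, fz, Module.End.one_apply, one_mul, mul_one,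
    sum_sum_ite]
  rw [h1, h2, h3, h4, add_zero b]
  simp only [eps, Pi.add_apply, Pi.single_apply, if_pos rfl, Int.cast_add, Int.cast_one,
    one_mul, mul_one]
  simp only [LinearMap.add_apply, LinearMap.sub_apply, LinearMap.smul_apply,
    Module.End.one_apply]
  simp only [if_true, Int.cast_one, Finsupp.smul_single, ← Finsupp.single_add,
    ← Finsupp.single_sub]
  refine congrArg (Finsupp.single _) ?_
  module

lemma eval_H2e1 [NeZero n] (b : Blat n) (v : V) :
    piB a T hT H2e1 (Finsupp.single b v)
      = Finsupp.single b
          (((1 / 2 : ℂ) • ((2 : ℂ) • T 0 + (2 * a 0 + 2 * (b.1 0 : ℂ) + 1) • 1)) v) := by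
  rw [piB_single, show ((H2e1 : spC n) : Matrix (Fin n ⊕ Fin n) (Fin n ⊕ Fin n) ℂ)
      = fromBlocks (Egl 0 0) 0 0 (-(Egl 0 0)) from by
        rw [show ((H2e1 : spC n) : Matrix (Fin n ⊕ Fin n) (Fin n ⊕ Fin n) ℂ)
          = fromBlocks (Egl 0 0) 0 0 (-(Egl 0 0)ᵀ) from rfl, Egl_t], muM_fromBlocks]
  have h1 : pairδ (Sum.inl 0) (Sum.inr 0) = (0 : Blat n) :=
    Subtype.ext (by simp [pairδ_coe, eps])
  have h2 : pairδ (Sum.inr 0) (Sum.inl 0) = (0 : Blat n) :=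
    Subtype.ext (by simp [pairδ_coe, eps])
  simp only [Fintype.sum_sum_type, fromBlocks_apply₁₁, fromBlocks_apply₁₂,
    fromBlocks_apply₂₁, fromBlocks_apply₂₂, Matrix.smul_apply, Matrix.zero_apply,
    neg_smul_neg, smul_zero, zero_smul, smul_eq_mul, Finset.sum_const_zero, add_zero, zero_add,
    Egl, Matrix.single, Matrix.of_apply, ite_and,
    mul_ite, mul_one, mul_zero, ite_smul, Finset.mem_univ, if_true,
    mul_add, add_smul, Finset.sum_add_distrib, fz, Module.End.one_apply, one_mul, mul_one,
    sum_sum_ite]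
  rw [h1, h2, add_zero b]
  simp only [eps, Pi.add_apply, Pi.single_apply, if_pos rfl, Int.cast_add, Int.cast_one,
    one_mul, mul_one]
  simp only [LinearMap.add_apply, LinearMap.smul_apply, Module.End.one_apply]
  simp only [if_true, Int.cast_one, Finsupp.smul_single, ← Finsupp.single_add,
    ← Finsupp.single_sub]
  refine congrArg (Finsupp.single _) ?_
  module


end Aux

/-- Given `a ∈ ℂⁿ` and commuting nilpotent operators `T₁, …, Tₙ` on a
finite-dimensional complex vector space `V`, the formulas (eq1) of Mazorchuk–Stroppel define
on `FV = ⊕_{b ∈ B} V^b` the structure of an `sp_{2n}(ℂ)`-module. -/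
theorem stmt10 (n : ℕ) [NeZero n] (a : Fin n → ℂ)
    (V : Type*) [AddCommGroup V] [Module ℂ V] [FiniteDimensional ℂ V]
    (T : Fin n → Module.End ℂ V)
    (hTcomm : ∀ i j, Commute (T i) (T j)) (hTnil : ∀ i, IsNilpotent (T i)) :
    ∃ π : spC n →ₗ⁅ℂ⁆ Module.End ℂ (Blat n →₀ V),
      (∀ i j : Fin n, i ≠ j → ∀ (b : Blat n) (v : V),
      π (Xem i j) (Finsupp.single b v)
        = Finsupp.single (b + dem i j) ((T j + (a j + (b.1 j : ℂ)) • 1) v)) ∧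
      (∀ (i j : Fin n) (b : Blat n) (v : V),
      π (Xep i j) (Finsupp.single b v) = Finsupp.single (b + dep i j) v) ∧
      (∀ i j : Fin n, i ≠ j → ∀ (b : Blat n) (v : V),
      π (Xm i j) (Finsupp.single b v)
        = Finsupp.single (b - dep i j)
            (((T i + (a i + (b.1 i : ℂ)) • 1) * (T j + (a j + (b.1 j : ℂ)) • 1)) v)) ∧
      (∀ (i : Fin n) (b : Blat n) (v : V),
      π (Xm i i) (Finsupp.single b v)
        = Finsupp.single (b - dep i i)
            (((T i + (a i + (b.1 i : ℂ)) • 1) * (T i + (a i + (b.1 i : ℂ) - 1) • 1)) v)) ∧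
      (∀ i j : Fin n, (j : ℕ) = (i : ℕ) + 1 → ∀ (b : Blat n) (v : V),
      π (Hem i j) (Finsupp.single b v)
        = Finsupp.single b
            ((T j - T i + (a j + (b.1 j : ℂ) - a i - (b.1 i : ℂ)) • 1) v)) ∧
      (∀ (b : Blat n) (v : V),
      π H2e1 (Finsupp.single b v)
        = Finsupp.single b
            (((1 / 2 : ℂ) • ((2 : ℂ) • T 0 + (2 * a 0 + 2 * (b.1 0 : ℂ) + 1) • 1)) v)) := by
  refine ⟨piB a T hTcomm, ?_, ?_, ?_, ?_, ?_, ?_⟩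
  · intro i j hij b v
    exact eval_Xem a T hTcomm i j hij b v
  · intro i j b v
    exact eval_Xep a T hTcomm i j b v
  · intro i j hij b v
    exact eval_Xm_ne a T hTcomm i j hij b v
  · intro i b v
    exact eval_Xm_eq a T hTcomm i b v
  · intro i j hij b v
    have hne : i ≠ j := by
      intro h
      rw [h] at hij
      omega
    exact eval_Hem a T hTcomm i j hne b v
  · intro b v
    exact eval_H2e1 a T hTcomm b v
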